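/- For each s ∈ {1,…,m}, t ∈ {1,…,m}, the commutator [(T^{𝔧,𝔟}_{z_s})*, T^{𝔧,𝔟}_{z_t}] is a compact operator on ℋ^{𝔟}_{𝔧}; that is, ℋ^{𝔟}_{𝔧} is an essentially normal Hilbert ℂ[z₁,…,z_m]-module. -/

import Mathlib

open scoped ENNReal

noncomputable section

/-- The box `ℬ^𝔟_𝔧 ⊆ ℕ^m`. -/
def Box (m : ℕ) (J : Finset (Fin m)) (b : Fin m → ℕ) : Set (Fin m → ℕ) :=
  {n | ∀ j ∈ J, n j ≤ b j}

/-- The Bergman space weight `ω₀(𝔫) = (∏ᵢ nᵢ!)·m!/(|𝔫|+m)!`. -/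
def omega0 (m : ℕ) (n : Fin m → ℕ) : ℝ :=
  ((∏ i, (n i).factorial) * m.factorial : ℕ) / (((∑ i, n i) + m).factorial : ℕ)

/-- `𝔫 + e_p`. -/
def bump (m : ℕ) (p : Fin m) (n : Fin m → ℕ) : Fin m → ℕ :=
  Function.update n p (n p + 1)

/-- The Hilbert space `ℋ^𝔟_𝔧` in coordinates w.r.t. its orthonormal basis of normalized
monomials indexed by the box. -/
abbrev BoxSpace (m : ℕ) (J : Finset (Fin m)) (b : Fin m → ℕ) :=
  lp (fun _ : {n : Fin m → ℕ // n ∈ Box m J b} => ℂ) (2 : ℝ≥0∞)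

/-!
In the basis of normalized monomials, `T_{z_p}` sends `e_n` to
`√((n_p + 1)/(|n| + m + 1)) e_{n + e_p}`, or to `0` when `n + e_p` leaves the box, so its adjoint
sends `e_{n + e_p}` back to the same multiple of `e_n` and kills `e_n` when `n_p = 0`. Hence
`[T_{z_s}*, T_{z_t}]` maps every `e_n` to a multiple of a single basis vector (`e_n` if `s = t`,
`e_{n - e_s + e_t}` otherwise), distinct `n` giving distinct basis vectors, and the coefficient is
`O(1/(|n| + m))`: for `s ≠ t` the two products of weights differ only through the denominators
`|n| + m` and `|n| + m + 1`, and for `s = t` the difference `(n_s + 1)/(|n| + m + 1) - n_s/(|n| + m)`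
is small unless `n + e_s` leaves the box, which forces `n_s = b_s`. An operator on `ℓ²` whose
columns are pairwise orthogonal and tend to `0` is the norm limit of its finite-rank truncations.
-/

open Filter Topology

section OrthogonalColumns

variable {𝕜 ι H : Type*} [RCLike 𝕜] [NormedAddCommGroup H] [InnerProductSpace 𝕜 H]

theorem lp.norm_sub_sum_single_le {E : ι → Type*} [∀ i, NormedAddCommGroup (E i)]
    [DecidableEq ι] {p : ℝ≥0∞} [Fact (1 ≤ p)] (hp : 0 < p.toReal) (y : lp E p) (F : Finset ι) :
    ‖y - ∑ n ∈ F, lp.single p n (y n)‖ ≤ ‖y‖ := by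
  refine (Real.rpow_le_rpow_iff (norm_nonneg (y - _)) (norm_nonneg y) hp).1 ?_
  rw [lp.norm_compl_sum_single hp]
  exact sub_le_self _ (Finset.sum_nonneg fun n _ => Real.rpow_nonneg (norm_nonneg (y n)) _)

theorem lp.sum_norm_sq_le_norm_sq {E : ι → Type*} [∀ i, NormedAddCommGroup (E i)]
    (y : lp E 2) (F : Finset ι) : ∑ n ∈ F, ‖y n‖ ^ 2 ≤ ‖y‖ ^ 2 := by
  classical
  have := lp.norm_sub_norm_compl_sub_single (p := 2) (by norm_num) y F
  simp only [ENNReal.toReal_ofNat, Real.rpow_two] at this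
  rw [← this]
  exact sub_le_self _ (by positivity)

theorem norm_sum_sq_eq_sum_norm_sq_of_pairwise {v : ι → H}
    (hv : Pairwise fun i j => inner 𝕜 (v i) (v j) = 0) (s : Finset ι) :
    ‖∑ i ∈ s, v i‖ ^ 2 = ∑ i ∈ s, ‖v i‖ ^ 2 := by
  classical
  induction s using Finset.induction_on with
  | empty => simp
  | insert i s hi ih =>
    rw [Finset.sum_insert hi, Finset.sum_insert hi, ← ih]
    have horth : inner 𝕜 (v i) (∑ j ∈ s, v j) = 0 := by
      rw [inner_sum]
      exact Finset.sum_eq_zero fun j hj => hv (ne_of_mem_of_not_mem hj hi).symm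
    simpa only [sq] using norm_add_sq_eq_norm_sq_add_norm_sq_of_inner_eq_zero _ _ horth

variable [DecidableEq ι]

local notation "ℓ²" => lp (fun _ : ι => 𝕜) 2

theorem lp.smul_single_one (c : 𝕜) (n : ι) :
    c • lp.single (E := fun _ : ι => 𝕜) 2 n 1 = lp.single 2 n c := by
  rw [← lp.single_smul, smul_eq_mul, mul_one]

theorem lp.map_single_eq_smul (C : ℓ² →L[𝕜] H) (n : ι) (c : 𝕜) :
    C (lp.single 2 n c) = c • C (lp.single 2 n 1) := by
  rw [← map_smul, lp.smul_single_one]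

theorem lp.inner_single_single_of_ne {n n' : ι} (h : n ≠ n') (c c' : 𝕜) :
    inner 𝕜 (lp.single (E := fun _ : ι => 𝕜) 2 n c) (lp.single 2 n' c') = 0 := by
  rw [lp.inner_single_left, lp.single_apply_ne _ _ _ h, inner_zero_right]

theorem lp.adjoint_apply_apply [CompleteSpace H] (T : ℓ² →L[𝕜] H) (x : H) (r : ι) :
    ContinuousLinearMap.adjoint T x r = inner 𝕜 (T (lp.single 2 r 1)) x := by
  rw [← ContinuousLinearMap.adjoint_inner_right, lp.inner_single_left, RCLike.inner_apply,
    map_one, mul_one]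

theorem norm_apply_le_of_pairwise_inner_eq_zero (C : ℓ² →L[𝕜] H)
    (horth : Pairwise fun n n' => inner 𝕜 (C (lp.single 2 n 1)) (C (lp.single 2 n' 1)) = 0)
    {ε : ℝ} (hε : 0 ≤ ε) (y : ℓ²) (hy : ∀ n, y n ≠ 0 → ‖C (lp.single 2 n 1)‖ ≤ ε) :
    ‖C y‖ ≤ ε * ‖y‖ := by
  have hsum : HasSum (fun n => y n • C (lp.single 2 n 1)) (C y) := by
    convert (lp.hasSum_single ENNReal.ofNat_ne_top y).mapL C using 1
    funext n
    exact (lp.map_single_eq_smul C n (y n)).symm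
  have hterm : ∀ n, ‖y n • C (lp.single 2 n 1)‖ ^ 2 ≤ (ε * ‖y n‖) ^ 2 := by
    intro n
    by_cases hn : y n = 0
    · simp [hn]
    · rw [norm_smul, mul_comm ε]
      gcongr
      exact hy n hn
  have hpartial : ∀ F : Finset ι, ‖∑ n ∈ F, y n • C (lp.single 2 n 1)‖ ≤ ε * ‖y‖ := by
    intro F
    refine le_of_sq_le_sq ?_ (by positivity)
    calc ‖∑ n ∈ F, y n • C (lp.single 2 n 1)‖ ^ 2
        = ∑ n ∈ F, ‖y n • C (lp.single 2 n 1)‖ ^ 2 :=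
          norm_sum_sq_eq_sum_norm_sq_of_pairwise (𝕜 := 𝕜) (fun n n' hnn' => by
            simp only [inner_smul_left, inner_smul_right, horth hnn', mul_zero]) F
      _ ≤ ∑ n ∈ F, (ε * ‖y n‖) ^ 2 := Finset.sum_le_sum fun n _ => hterm n
      _ = ε ^ 2 * ∑ n ∈ F, ‖y n‖ ^ 2 := by rw [Finset.mul_sum]; simp only [mul_pow]
      _ ≤ ε ^ 2 * ‖y‖ ^ 2 := by gcongr; exact lp.sum_norm_sq_le_norm_sq y F
      _ = (ε * ‖y‖) ^ 2 := (mul_pow _ _ _).symm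
  exact le_of_tendsto' hsum.norm hpartial

theorem isCompactOperator_of_pairwise_inner_eq_zero [CompleteSpace H] (C : ℓ² →L[𝕜] H)
    (horth : Pairwise fun n n' => inner 𝕜 (C (lp.single 2 n 1)) (C (lp.single 2 n' 1)) = 0)
    (hC : Tendsto (fun n => C (lp.single 2 n 1)) cofinite (𝓝 0)) :
    IsCompactOperator C := by
  let A : Finset ι → ℓ² →L[𝕜] H := fun F =>
    ∑ n ∈ F, (lp.evalCLM 𝕜 (fun _ : ι => 𝕜) 2 n).smulRight (C (lp.single 2 n 1))
  have hdiff : ∀ F y, C y - A F y = C (y - ∑ n ∈ F, lp.single 2 n (y n)) := by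
    intro F y
    simp only [A, FunLike.coe_sum, Finset.sum_apply,
      ContinuousLinearMap.smulRight_apply, map_sub, map_sum]
    rw [Finset.sum_congr rfl fun n _ => lp.map_single_eq_smul C n (y n)]
    rfl
  refine isCompactOperator_of_tendsto (l := atTop) (F := A) ?_ (Eventually.of_forall fun F => ?_)
  · rw [Metric.tendsto_nhds]
    intro ε hε
    have hfin : {n | ε / 2 ≤ ‖C (lp.single 2 n 1)‖}.Finite := by
      simpa using (tendsto_zero_iff_norm_tendsto_zero.1 hC).eventually (gt_mem_nhds (half_pos hε))
    refine eventually_atTop.2 ⟨hfin.toFinset, fun F hF => ?_⟩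
    rw [dist_comm, dist_eq_norm]
    refine lt_of_le_of_lt (ContinuousLinearMap.opNorm_le_bound _ (half_pos hε).le fun y => ?_)
      (half_lt_self hε)
    change ‖C y - A F y‖ ≤ _
    rw [hdiff]
    refine (norm_apply_le_of_pairwise_inner_eq_zero C horth (half_pos hε).le _ fun n hn => ?_).trans
      (by gcongr; exact lp.norm_sub_sum_single_le (by norm_num) y F)
    have hnF : n ∉ F := fun h => hn (by
      simp only [lp.coeFn_sub, lp.coeFn_sum, Pi.sub_apply, Finset.sum_apply, lp.coeFn_single,
        Finset.sum_pi_single, if_pos h, sub_self])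
    exact (not_le.1 fun h => hnF (hF (hfin.mem_toFinset.2 h))).le
  · refine Finset.sum_induction _ (fun T : ℓ² →L[𝕜] H => IsCompactOperator T)
      (fun _ _ => IsCompactOperator.add) isCompactOperator_zero fun n _ => ?_
    exact (isCompactOperator_of_locallyCompactSpace_rng
      (ContinuousLinearMap.toSpanSingleton 𝕜 (C (lp.single 2 n 1)))).comp_clm
      (lp.evalCLM 𝕜 (fun _ : ι => 𝕜) 2 n)

end OrthogonalColumns

theorem tendsto_sum_cofinite_atTop {ι : Type*} [Fintype ι] :
    Tendsto (fun n : ι → ℕ => ∑ i, n i) cofinite atTop := by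
  classical
  refine tendsto_atTop.2 fun M => eventually_cofinite.2 ((Set.finite_Iic fun _ => M).subset ?_)
  intro n hn i
  exact (Finset.single_le_sum_of_canonicallyOrdered (Finset.mem_univ i)).trans (not_le.1 hn).le

theorem tendsto_zero_of_norm_le_div_sum {ι E : Type*} [Fintype ι] [SeminormedAddCommGroup E]
    {S : Set (ι → ℕ)} (f : S → E) (K c : ℝ)
    (hf : ∀ n, ‖f n‖ ≤ K / ((∑ i, n.1 i : ℕ) + c)) : Tendsto f cofinite (𝓝 0) := by
  have hsum : Tendsto (fun n : S => ((∑ i, n.1 i : ℕ) : ℝ) + c) cofinite atTop :=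
    tendsto_atTop_add_const_right _ c (tendsto_natCast_atTop_atTop.comp
      (tendsto_sum_cofinite_atTop.comp Subtype.val_injective.tendsto_cofinite))
  exact squeeze_zero_norm hf (tendsto_const_nhds.div_atTop hsum)

theorem abs_div_add_one_sub_div_le {a N : ℝ} (ha : 0 ≤ a) (haN : a ≤ N) (hN : 0 < N) :
    |(a + 1) / (N + 1) - a / N| ≤ 1 / N := by
  have hdiff : (a + 1) / (N + 1) - a / N = (N - a) / (N * (N + 1)) := by
    field_simp
    ring
  rw [hdiff, abs_of_nonneg (div_nonneg (sub_nonneg.2 haN) (by positivity)),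
    div_le_div_iff₀ (by positivity) hN]
  nlinarith

theorem abs_sqrt_mul_sqrt_sub_le {a c D : ℝ} (ha : 0 ≤ a) (hc : 0 ≤ c) (haD : a ≤ D)
    (hcD : c ≤ D) (hD : 0 < D) :
    |√(a / (D + 1)) * √(c / (D + 1)) - √(a / D) * √(c / D)| ≤ 1 / D := by
  have hsqrt : ∀ E : ℝ, 0 < E → √(a / E) * √(c / E) = √(a * c) / E := fun E hE => by
    rw [← Real.sqrt_mul (div_nonneg ha hE.le), div_mul_div_comm, Real.sqrt_div (mul_nonneg ha hc),
      Real.sqrt_mul_self hE.le]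
  have hac : √(a * c) ≤ D := (Real.sqrt_le_left hD.le).mpr (by nlinarith)
  rw [hsqrt _ (by positivity), hsqrt _ hD, abs_sub_comm,
    abs_of_nonneg (sub_nonneg.2 (div_le_div_of_nonneg_left (Real.sqrt_nonneg _) hD (by linarith))),
    div_sub_div _ _ hD.ne' (by positivity), div_le_div_iff₀ (by positivity) hD]
  nlinarith [Real.sqrt_nonneg (a * c)]

section Bump

variable {m : ℕ}

@[simp]
theorem bump_apply_self (p : Fin m) (n : Fin m → ℕ) : bump m p n p = n p + 1 :=
  Function.update_self ..

theorem bump_apply_of_ne {p j : Fin m} (h : j ≠ p) (n : Fin m → ℕ) : bump m p n j = n j :=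
  Function.update_of_ne h ..

theorem bump_eq_add_single (p : Fin m) (n : Fin m → ℕ) : bump m p n = n + Pi.single p 1 := by
  ext j
  rcases eq_or_ne j p with rfl | h
  · simp
  · simp [bump_apply_of_ne h, h]

theorem le_bump (p : Fin m) (n : Fin m → ℕ) : n ≤ bump m p n := by
  rw [bump_eq_add_single]
  exact le_self_add

theorem bump_injective (p : Fin m) : Function.Injective (bump m p) := by
  intro x y h
  rw [bump_eq_add_single, bump_eq_add_single] at h
  exact add_right_cancel h

theorem bump_comm (s t : Fin m) (n : Fin m → ℕ) :
    bump m s (bump m t n) = bump m t (bump m s n) := by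
  simp only [bump_eq_add_single, add_right_comm]

theorem exists_bump_eq {p : Fin m} {n : Fin m → ℕ} (h : n p ≠ 0) : ∃ k, bump m p k = n := by
  refine ⟨Function.update n p (n p - 1), funext fun j => ?_⟩
  rcases eq_or_ne j p with rfl | hj
  · simp only [bump_apply_self, Function.update_self]
    omega
  · simp [bump_apply_of_ne hj, hj]

theorem sum_bump (p : Fin m) (n : Fin m → ℕ) : ∑ i, bump m p n i = ∑ i, n i + 1 := by
  simp [bump_eq_add_single, Finset.sum_add_distrib]

theorem prod_factorial_bump (p : Fin m) (n : Fin m → ℕ) :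
    ∏ i, (bump m p n i).factorial = (n p + 1) * ∏ i, (n i).factorial := by
  rw [← Finset.mul_prod_erase _ _ (Finset.mem_univ p),
    ← Finset.mul_prod_erase _ _ (Finset.mem_univ p), bump_apply_self, Nat.factorial_succ, mul_assoc]
  congr 2
  exact Finset.prod_congr rfl fun j hj => by rw [bump_apply_of_ne (Finset.ne_of_mem_erase hj)]

theorem omega0_bump_div (p : Fin m) (n : Fin m → ℕ) :
    omega0 m (bump m p n) / omega0 m n = ((n p : ℝ) + 1) / ((∑ i, n i : ℕ) + m + 1) := by
  have hfac : (∑ i, n i + 1 + m).factorial = (∑ i, n i + m + 1) * (∑ i, n i + m).factorial := by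
    rw [add_right_comm, Nat.factorial_succ]
  rw [omega0, omega0, sum_bump, prod_factorial_bump, hfac]
  have : (0 : ℝ) < ((∏ i, (n i).factorial : ℕ) : ℝ) := by
    exact_mod_cast Finset.prod_pos fun i _ => (n i).factorial_pos
  have := m.factorial_pos
  have := (∑ i, n i + m).factorial_pos
  push_cast
  field_simp

def bumpWeight (m : ℕ) (p : Fin m) (n : Fin m → ℕ) : ℝ :=
  √(((n p : ℝ) + 1) / ((∑ i, n i : ℕ) + m + 1))

theorem bumpWeight_mul_self (p : Fin m) (n : Fin m → ℕ) :
    bumpWeight m p n * bumpWeight m p n = ((n p : ℝ) + 1) / ((∑ i, n i : ℕ) + m + 1) :=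
  Real.mul_self_sqrt (by positivity)

theorem abs_bumpWeight_commutator_le {s t : Fin m} (hst : s ≠ t) (k : Fin m → ℕ) :
    |bumpWeight m t (bump m s k) * bumpWeight m s (bump m t k) -
        bumpWeight m s k * bumpWeight m t k| ≤ 1 / ((∑ i, k i : ℕ) + m + 1) := by
  have hle : ∀ i, (k i : ℝ) + 1 ≤ (∑ i, k i : ℕ) + m + 1 := fun i => by
    have : ((k i : ℕ) : ℝ) ≤ ((∑ i, k i : ℕ) : ℝ) := by
      exact_mod_cast Finset.single_le_sum_of_canonicallyOrdered (Finset.mem_univ i)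
    linarith [(m.cast_nonneg : (0 : ℝ) ≤ m)]
  have := abs_sqrt_mul_sqrt_sub_le (by positivity) (by positivity) (hle t) (hle s) (by positivity)
  rw [bumpWeight, bumpWeight, bumpWeight, bumpWeight, bump_apply_of_ne hst.symm,
    bump_apply_of_ne hst, sum_bump, sum_bump, mul_comm (√(((k s : ℝ) + 1) / _))]
  convert this using 6 <;> push_cast <;> ring

end Bump

section BoxLattice

variable {m : ℕ} {J : Finset (Fin m)} {b : Fin m → ℕ}

theorem isLowerSet_box : IsLowerSet (Box m J b) :=
  fun _ _ hle hn j hj => (hle j).trans (hn j hj)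

theorem le_of_bump_notMem_box {p : Fin m} {n : Fin m → ℕ} (hn : n ∈ Box m J b)
    (h : bump m p n ∉ Box m J b) : n p ≤ b p := by
  contrapose! h
  intro j hj
  rcases eq_or_ne j p with rfl | hjp
  · exact absurd (hn j hj) (not_le.2 h)
  · simpa [bump_apply_of_ne hjp] using hn j hj

theorem bump_bump_mem_box_iff {s t : Fin m} (hst : s ≠ t) {k : Fin m → ℕ}
    (hk : bump m s k ∈ Box m J b) :
    bump m t (bump m s k) ∈ Box m J b ↔ bump m t k ∈ Box m J b := by
  refine ⟨fun h => isLowerSet_box (by rw [bump_comm]; exact le_bump _ _) h, fun h j hj => ?_⟩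
  rcases eq_or_ne j t with rfl | hjt
  · simpa [bump_apply_of_ne hst.symm] using h j hj
  · rw [bump_apply_of_ne hjt]
    exact hk j hj

open scoped Classical in
theorem abs_selfCommutator_coeff_le {p : Fin m} {n : Fin m → ℕ} (hn : n ∈ Box m J b) :
    |(if bump m p n ∈ Box m J b then ((n p : ℝ) + 1) / ((∑ i, n i : ℕ) + m + 1) else 0) -
        (n p : ℝ) / ((∑ i, n i : ℕ) + m)| ≤ ((b p : ℝ) + 1) / ((∑ i, n i : ℕ) + m) := by
  have hN : (0 : ℝ) < (∑ i, n i : ℕ) + m := by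
    have : (0 : ℝ) < m := by exact_mod_cast p.pos
    positivity
  have hle : (n p : ℝ) ≤ (∑ i, n i : ℕ) + m := by
    have : ((n p : ℕ) : ℝ) ≤ ((∑ i, n i : ℕ) : ℝ) := by
      exact_mod_cast Finset.single_le_sum_of_canonicallyOrdered (Finset.mem_univ p)
    linarith [(m.cast_nonneg : (0 : ℝ) ≤ m)]
  by_cases h : bump m p n ∈ Box m J b
  · rw [if_pos h]
    refine (abs_div_add_one_sub_div_le (by positivity) hle hN).trans ?_
    gcongr
    linarith [(b p).cast_nonneg (α := ℝ)]
  · have hb : (n p : ℝ) ≤ b p := by exact_mod_cast le_of_bump_notMem_box hn h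
    rw [if_neg h, zero_sub, abs_neg, abs_of_nonneg (div_nonneg (Nat.cast_nonneg _) hN.le)]
    gcongr
    linarith

end BoxLattice

section CompressedShift

open scoped Classical

variable {m : ℕ} {J : Finset (Fin m)} {b : Fin m → ℕ}

local notation "ℬ" => {n : Fin m → ℕ // n ∈ Box m J b}

/-- `A` acts on the monomial basis as the compression `T^{𝔧,𝔟}_{z_p}`. -/
def IsCompressedShift (p : Fin m) (A : BoxSpace m J b →L[ℂ] BoxSpace m J b) : Prop :=
  ∀ n : ℬ, A (lp.single 2 n 1) =
    if h : bump m p n.1 ∈ Box m J b then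
      (Real.sqrt (omega0 m (bump m p n.1) / omega0 m n.1) : ℂ) •
        lp.single 2 (⟨bump m p n.1, h⟩ : ℬ) 1
    else 0

namespace IsCompressedShift

section

variable {p : Fin m} {A : BoxSpace m J b →L[ℂ] BoxSpace m J b}

theorem apply_single_of_eq (hA : IsCompressedShift p A) {n q : ℬ} (hq : q.1 = bump m p n.1) :
    A (lp.single 2 n 1) = lp.single 2 q (bumpWeight m p n.1 : ℂ) := by
  have h : bump m p n.1 ∈ Box m J b := hq ▸ q.2
  obtain rfl : q = ⟨bump m p n.1, h⟩ := Subtype.ext hq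
  rw [hA n, dif_pos h, lp.smul_single_one, omega0_bump_div]
  rfl

theorem apply_single_of_notMem (hA : IsCompressedShift p A) {n : ℬ}
    (h : bump m p n.1 ∉ Box m J b) : A (lp.single 2 n 1) = 0 := by
  rw [hA n, dif_neg h]

theorem inner_apply_single_single_eq_zero (hA : IsCompressedShift p A) {r q : ℬ}
    (h : bump m p r.1 ≠ q.1) : inner ℂ (A (lp.single 2 r 1)) (lp.single 2 q 1) = 0 := by
  by_cases hr : bump m p r.1 ∈ Box m J b
  · rw [hA.apply_single_of_eq (q := ⟨_, hr⟩) rfl,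
      lp.inner_single_single_of_ne fun he => h (congrArg Subtype.val he)]
  · rw [hA.apply_single_of_notMem hr, inner_zero_left]

theorem adjoint_apply_single_of_eq (hA : IsCompressedShift p A) {k q : ℬ}
    (hq : q.1 = bump m p k.1) :
    ContinuousLinearMap.adjoint A (lp.single 2 q 1) = lp.single 2 k (bumpWeight m p k.1 : ℂ) := by
  ext r
  rw [lp.adjoint_apply_apply]
  rcases eq_or_ne r k with rfl | hrk
  · rw [hA.apply_single_of_eq hq, lp.inner_single_left, lp.single_apply_self,
      lp.single_apply_self, RCLike.inner_apply, Complex.conj_ofReal, one_mul]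
  · rw [hA.inner_apply_single_single_eq_zero
        fun he => hrk (Subtype.ext (bump_injective p (he.trans hq))),
      lp.single_apply_ne _ _ _ hrk]

theorem adjoint_apply_single_of_eq_zero (hA : IsCompressedShift p A) {n : ℬ} (h : n.1 p = 0) :
    ContinuousLinearMap.adjoint A (lp.single 2 n 1) = 0 := by
  ext r
  rw [lp.adjoint_apply_apply, hA.inner_apply_single_single_eq_zero fun he => by
    simpa [h] using congrFun he p]
  rfl

theorem adjoint_apply_apply_single (hA : IsCompressedShift p A) (n : ℬ) :
    ContinuousLinearMap.adjoint A (A (lp.single 2 n 1)) = lp.single 2 n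
      ((if bump m p n.1 ∈ Box m J b then ((n.1 p : ℝ) + 1) / ((∑ i, n.1 i : ℕ) + m + 1)
        else 0 : ℝ) : ℂ) := by
  by_cases h : bump m p n.1 ∈ Box m J b
  · rw [hA.apply_single_of_eq (q := ⟨_, h⟩) rfl, lp.map_single_eq_smul,
      hA.adjoint_apply_single_of_eq rfl, ← lp.single_smul, smul_eq_mul, ← Complex.ofReal_mul,
      bumpWeight_mul_self, if_pos h]
  · rw [hA.apply_single_of_notMem h, map_zero, if_neg h, Complex.ofReal_zero, lp.single_zero]

theorem apply_adjoint_apply_single (hA : IsCompressedShift p A) (n : ℬ) :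
    A (ContinuousLinearMap.adjoint A (lp.single 2 n 1)) =
      lp.single 2 n (((n.1 p : ℝ) / ((∑ i, n.1 i : ℕ) + m) : ℝ) : ℂ) := by
  obtain ⟨n, hn⟩ := n
  by_cases h : n p = 0
  · rw [hA.adjoint_apply_single_of_eq_zero h, map_zero]
    simp [h]
  obtain ⟨k, rfl⟩ := exists_bump_eq h
  have hk : k ∈ Box m J b := isLowerSet_box (le_bump p k) hn
  rw [hA.adjoint_apply_single_of_eq (k := ⟨k, hk⟩) rfl, lp.map_single_eq_smul,
    hA.apply_single_of_eq (q := ⟨_, hn⟩) rfl, ← lp.single_smul, smul_eq_mul,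
    ← Complex.ofReal_mul, bumpWeight_mul_self]
  simp only [bump_apply_self, sum_bump]
  push_cast
  ring_nf

theorem isCompactOperator_selfCommutator (hA : IsCompressedShift p A) :
    IsCompactOperator
      (ContinuousLinearMap.adjoint A ∘L A - A ∘L ContinuousLinearMap.adjoint A) := by
  set d : ℬ → ℝ := fun n =>
    (if bump m p n.1 ∈ Box m J b then ((n.1 p : ℝ) + 1) / ((∑ i, n.1 i : ℕ) + m + 1) else 0) -
      (n.1 p : ℝ) / ((∑ i, n.1 i : ℕ) + m)
  have hcol : ∀ n, (ContinuousLinearMap.adjoint A ∘L A - A ∘L ContinuousLinearMap.adjoint A)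
      (lp.single 2 n 1) = lp.single 2 n (d n : ℂ) := fun n => by
    rw [sub_apply, ContinuousLinearMap.comp_apply, ContinuousLinearMap.comp_apply,
      hA.adjoint_apply_apply_single, hA.apply_adjoint_apply_single, ← lp.single_sub,
      ← Complex.ofReal_sub]
  refine isCompactOperator_of_pairwise_inner_eq_zero _ (fun n n' h => ?_) ?_
  · dsimp only
    rw [hcol, hcol]
    exact lp.inner_single_single_of_ne h _ _
  refine tendsto_zero_of_norm_le_div_sum _ (b p + 1) m fun n => ?_
  rw [hcol, lp.norm_single (by norm_num), Complex.norm_real, Real.norm_eq_abs]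
  exact abs_selfCommutator_coeff_le n.2

end

variable {s t : Fin m} {A B : BoxSpace m J b →L[ℂ] BoxSpace m J b}

theorem adjoint_comp_sub_comp_adjoint_apply_single (hA : IsCompressedShift s A)
    (hB : IsCompressedShift t B) (hst : s ≠ t) (n : ℬ) :
    (ContinuousLinearMap.adjoint A ∘L B - B ∘L ContinuousLinearMap.adjoint A)
        (lp.single 2 n 1) = 0 ∨
      ∃ k q : ℬ, n.1 = bump m s k.1 ∧ q.1 = bump m t k.1 ∧
        (ContinuousLinearMap.adjoint A ∘L B - B ∘L ContinuousLinearMap.adjoint A)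
          (lp.single 2 n 1) =
          lp.single 2 q ((bumpWeight m t (bump m s k.1) * bumpWeight m s (bump m t k.1) -
            bumpWeight m s k.1 * bumpWeight m t k.1 : ℝ) : ℂ) := by
  simp only [sub_apply, ContinuousLinearMap.comp_apply]
  obtain ⟨n, hn⟩ := n
  by_cases h : n s = 0
  · left
    rw [hA.adjoint_apply_single_of_eq_zero h, map_zero, sub_zero]
    by_cases hb : bump m t n ∈ Box m J b
    · rw [hB.apply_single_of_eq (q := ⟨_, hb⟩) rfl, lp.map_single_eq_smul,
        hA.adjoint_apply_single_of_eq_zero (by simpa [bump_apply_of_ne hst] using h), smul_zero]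
    · rw [hB.apply_single_of_notMem hb, map_zero]
  obtain ⟨k, rfl⟩ := exists_bump_eq h
  have hk : k ∈ Box m J b := isLowerSet_box (le_bump s k) hn
  rw [hA.adjoint_apply_single_of_eq (k := ⟨k, hk⟩) rfl, lp.map_single_eq_smul B ⟨k, hk⟩]
  by_cases hb : bump m t k ∈ Box m J b
  · right
    refine ⟨⟨k, hk⟩, ⟨_, hb⟩, rfl, rfl, ?_⟩
    have hts := (bump_bump_mem_box_iff hst hn).2 hb
    rw [hB.apply_single_of_eq (q := ⟨_, hts⟩) rfl,
      lp.map_single_eq_smul (ContinuousLinearMap.adjoint A),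
      hA.adjoint_apply_single_of_eq (k := ⟨_, hb⟩) (bump_comm t s k),
      hB.apply_single_of_eq (q := ⟨_, hb⟩) rfl]
    simp only [← lp.single_smul, smul_eq_mul, ← lp.single_sub]
    push_cast
    ring_nf
  · left
    rw [hB.apply_single_of_notMem (mt (bump_bump_mem_box_iff hst hn).1 hb), map_zero,
      hB.apply_single_of_notMem hb, smul_zero, sub_zero]

theorem isCompactOperator_adjoint_comp_sub_comp_adjoint (hA : IsCompressedShift s A)
    (hB : IsCompressedShift t B) (hst : s ≠ t) :
    IsCompactOperator
      (ContinuousLinearMap.adjoint A ∘L B - B ∘L ContinuousLinearMap.adjoint A) := by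
  have hcol := hA.adjoint_comp_sub_comp_adjoint_apply_single hB hst
  refine isCompactOperator_of_pairwise_inner_eq_zero _ (fun n n' hnn' => ?_) ?_
  · dsimp only
    rcases hcol n with h | ⟨k, q, hn, hq, h⟩
    · rw [h, inner_zero_left]
    rcases hcol n' with h' | ⟨k', q', hn', hq', h'⟩
    · rw [h', inner_zero_right]
    refine h ▸ h' ▸ lp.inner_single_single_of_ne (fun hqq => hnn' (Subtype.ext ?_)) _ _
    rw [hn, hn', bump_injective t (hq.symm.trans ((congrArg Subtype.val hqq).trans hq'))]
  refine tendsto_zero_of_norm_le_div_sum _ 1 m fun n => ?_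
  rcases hcol n with h | ⟨k, q, hn, -, h⟩
  · rw [h, norm_zero]
    positivity
  rw [h, lp.norm_single (by norm_num), Complex.norm_real, Real.norm_eq_abs, hn, sum_bump]
  refine (abs_bumpWeight_commutator_le hst k.1).trans_eq ?_
  push_cast
  ring

end IsCompressedShift

end CompressedShift

open scoped Classical in
/-- the compressed multiplication operators `T^{𝔧,𝔟}_{z_p}` on `ℋ^𝔟_𝔧` are
essentially normal: all commutators `[(T^{𝔧,𝔟}_{z_s})*, T^{𝔧,𝔟}_{z_t}]` are compact. -/
theorem boxSpace_essentially_normal (m : ℕ) (J : Finset (Fin m)) (b : Fin m → ℕ)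
    (T : Fin m → (BoxSpace m J b →L[ℂ] BoxSpace m J b))
    (hT : ∀ (p : Fin m) (n : {n : Fin m → ℕ // n ∈ Box m J b}),
      T p (lp.single 2 n 1) =
        if h : bump m p n.1 ∈ Box m J b then
          (Real.sqrt (omega0 m (bump m p n.1) / omega0 m n.1) : ℂ) •
            lp.single 2 (⟨bump m p n.1, h⟩ : {n : Fin m → ℕ // n ∈ Box m J b}) 1
        else 0) :
    ∀ s t : Fin m,
      IsCompactOperator
        ⇑(ContinuousLinearMap.adjoint (T s) ∘L T t -
          T t ∘L ContinuousLinearMap.adjoint (T s)) := by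
  intro s t
  rcases eq_or_ne s t with rfl | hst
  · exact IsCompressedShift.isCompactOperator_selfCommutator (hT s)
  · exact IsCompressedShift.isCompactOperator_adjoint_comp_sub_comp_adjoint (hT s) (hT t) hst
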